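/- arXiv:1404.4127 — 6 statements merged into one kernel-verified Lean document; each statement's English description precedes it below -/
import Mathlib

section
/- Let M be a finite matroid that is not pseudomodular. Then there exist a flat B of M and a subset A of the ground set such that r(A/B) = 1 and A has no pseudointersection with B (i.e. A ⋪ B). -/
/-- A matroid on a finite ground set `N`, given by an integer-valued rank
function satisfying the standard rank axioms. -/
structure FinMatroid (N : Type) [Fintype N] [DecidableEq N] where
  r : Finset N → ℤ
  r_nonneg : ∀ A, 0 ≤ r A
  r_le_card : ∀ A, r A ≤ (A.card : ℤ)
  r_mono : ∀ ⦃A B : Finset N⦄, A ⊆ B → r A ≤ r B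
  submodular : ∀ A B, r (A ∪ B) + r (A ∩ B) ≤ r A + r B

namespace FinMatroid

variable {N : Type} [Fintype N] [DecidableEq N]

/-- A set `F` is a flat if adding any element outside of `F` increases the rank. -/
def IsFlat (M : FinMatroid N) (F : Finset N) : Prop :=
  ∀ n ∉ F, M.r F < M.r (insert n F)

instance (M : FinMatroid N) (F : Finset N) : Decidable (M.IsFlat F) := by
  unfold IsFlat; infer_instance

/-- The Δ function of a (multi-indexed) family of sets: `Δ(C) = Σ_{S ⊆ I} (−1)^{|S|} r(F_S)`,
where `F_S` is the intersection of the members indexed by `S` for nonempty `S`, and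
`F_∅` is the union of all members of the family. -/
def delta (M : FinMatroid N) {ι : Type} [Fintype ι] [DecidableEq ι]
    (F : ι → Finset N) : ℤ :=
  ∑ S : Finset ι, (-1 : ℤ) ^ S.card *
    M.r (if S.Nonempty then S.inf F else Finset.univ.sup F)

/-- `M` is `n`-flat if `Δ(C) ≤ 0` for every family `C` of at most `n` flats. -/
def NFlat (M : FinMatroid N) (n : ℕ) : Prop :=
  ∀ (ι : Type) (_ : Fintype ι) (_ : DecidableEq ι) (F : ι → Finset N),
    Fintype.card ι ≤ n → (∀ i, M.IsFlat (F i)) → M.delta F ≤ 0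

/-- `M` is totally flat if `Δ(C) ≤ 0` for every finite family `C` of flats. -/
def TotallyFlat (M : FinMatroid N) : Prop :=
  ∀ (ι : Type) (_ : Fintype ι) (_ : DecidableEq ι) (F : ι → Finset N),
    (∀ i, M.IsFlat (F i)) → M.delta F ≤ 0

/-- `r(A/B) := r(A ∪ B) − r(B)`, the rank of `A` after contracting `B`. -/
def relRk (M : FinMatroid N) (A B : Finset N) : ℤ :=
  M.r (A ∪ B) - M.r B

/-- `B₀` is the pseudointersection of `A` and `B`: a flat `B₀ ⊆ B` such that for every
flat `B₁ ⊆ B`, `r(A/B₁) = r(A/B)` if and only if `B₀ ⊆ B₁`. -/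
def IsPseudoInter (M : FinMatroid N) (A B B₀ : Finset N) : Prop :=
  M.IsFlat B₀ ∧ B₀ ⊆ B ∧
    ∀ B₁, M.IsFlat B₁ → B₁ ⊆ B → (M.relRk A B₁ = M.relRk A B ↔ B₀ ⊆ B₁)

/-- `M` is pseudomodular if the pseudointersection of `A` and `B` exists for
all flats `A`, `B`. -/
def Pseudomodular (M : FinMatroid N) : Prop :=
  ∀ A B, M.IsFlat A → M.IsFlat B → ∃ B₀, M.IsPseudoInter A B B₀

/-- The closure of `A`: the smallest flat containing `A`, i.e. the intersection
of all flats containing `A`. -/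
def cl (M : FinMatroid N) (A : Finset N) : Finset N :=
  Finset.univ.filter (fun x => ∀ F : Finset N, M.IsFlat F → A ⊆ F → x ∈ F)

/-- A set `S` is cyclic if removing any element of `S` does not change its rank. -/
def Cyclic (M : FinMatroid N) (S : Finset N) : Prop :=
  ∀ n ∈ S, M.r (S.erase n) = M.r S

/-- A circuit is a minimal dependent set: it is dependent, and every proper
subset is independent. -/
def IsCircuit (M : FinMatroid N) (S : Finset N) : Prop :=
  M.r S < (S.card : ℤ) ∧ ∀ T ⊂ S, M.r T = (T.card : ℤ)

end FinMatroid

/-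
Suppose every pair with `r(A/B) = 1` has a pseudointersection; we build one for every pair
by induction on `k = r(A/B)`. For `k = 0` it is `cl A`. For `k + 1`, pick `A₀ ⊆ A` with
`r(A₀/B) = k` and let `H = cl (A₀ ∪ B)`, so that `r(A/H) = 1` and `A, H` have a
pseudointersection `Q ⊆ H`. Then `A₀ ∪ Q` has rank `k` over `B`, and by induction a
pseudointersection `C` with `B`. Submodularity shows that for flats `B₁ ⊆ B`, `A` keeps its
rank over `B₁` exactly when `A₀ ∪ Q` does, so `C` is also the pseudointersection of `A`
and `B`.
-/

namespace FinMatroid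

open Finset

variable {N : Type} [Fintype N] [DecidableEq N] (M : FinMatroid N)

lemma r_insert_le (x : N) (A : Finset N) : M.r (insert x A) ≤ M.r A + 1 := by
  have h := M.submodular {x} A
  have hx : M.r {x} ≤ 1 := by simpa using M.r_le_card {x}
  rw [← insert_eq] at h
  linarith [M.r_nonneg ({x} ∩ A)]

lemma r_insert_eq_of_subset {x : N} {X Y : Finset N} (hXY : X ⊆ Y)
    (h : M.r (insert x X) = M.r X) : M.r (insert x Y) = M.r Y := by
  have hs := M.submodular (insert x X) Y
  rw [insert_union, union_eq_right.mpr hXY] at hs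
  have h₁ : M.r X ≤ M.r (insert x X ∩ Y) := M.r_mono (subset_inter (subset_insert x X) hXY)
  linarith [M.r_mono (subset_insert x Y)]

lemma r_union_eq_of_forall_r_insert_eq {A C : Finset N}
    (h : ∀ x ∈ C, M.r (insert x A) = M.r A) : M.r (A ∪ C) = M.r A := by
  induction C using Finset.induction_on with
  | empty => simp
  | insert a C _ ih =>
    rw [union_insert, M.r_insert_eq_of_subset subset_union_left (h a (mem_insert_self a C)),
      ih fun x hx => h x (mem_insert_of_mem hx)]

lemma mem_cl {A : Finset N} {x : N} :
    x ∈ M.cl A ↔ ∀ F, M.IsFlat F → A ⊆ F → x ∈ F := by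
  simp [cl]

lemma subset_cl (A : Finset N) : A ⊆ M.cl A := fun _ hx =>
  M.mem_cl.mpr fun _ _ hAF => hAF hx

lemma cl_subset_of_isFlat {A F : Finset N} (hF : M.IsFlat F) (hAF : A ⊆ F) : M.cl A ⊆ F :=
  fun _ hx => M.mem_cl.mp hx F hF hAF

lemma r_insert_eq_of_mem_cl {A : Finset N} {x : N} (hx : x ∈ M.cl A) :
    M.r (insert x A) = M.r A := by
  by_contra hne
  -- `A` together with every element that does not raise its rank is a flat avoiding `x`.
  set F := A ∪ univ.filter fun y => M.r (insert y A) = M.r A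
  have hrF : M.r F = M.r A := M.r_union_eq_of_forall_r_insert_eq fun y hy => by
    simpa using hy
  have hF : M.IsFlat F := fun y hy => by
    simp only [F, mem_union, mem_filter, mem_univ, true_and, not_or] at hy
    calc M.r F = M.r A := hrF
      _ < M.r (insert y A) := (M.r_mono (subset_insert y A)).lt_of_ne (Ne.symm hy.2)
      _ ≤ M.r (insert y F) := M.r_mono (insert_subset_insert y subset_union_left)
  have hxF := M.mem_cl.mp hx F hF subset_union_left
  simp only [F, mem_union, mem_filter, mem_univ, true_and] at hxF
  rcases hxF with hxA | hxA
  · exact hne (by rw [insert_eq_of_mem hxA])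
  · exact hne hxA

lemma r_union_cl (X A : Finset N) : M.r (X ∪ M.cl A) = M.r (X ∪ A) := by
  rw [← union_eq_right.mpr (M.subset_cl A), ← union_assoc]
  exact M.r_union_eq_of_forall_r_insert_eq fun _ hx =>
    M.r_insert_eq_of_subset subset_union_right (M.r_insert_eq_of_mem_cl hx)

lemma r_cl (A : Finset N) : M.r (M.cl A) = M.r A := by
  simpa using M.r_union_cl ∅ A

lemma isFlat_cl (A : Finset N) : M.IsFlat (M.cl A) := by
  intro x hx
  obtain ⟨F, hF, hAF, hxF⟩ : ∃ F, M.IsFlat F ∧ A ⊆ F ∧ x ∉ F := by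
    simpa [mem_cl] using hx
  refine (M.r_mono (subset_insert x _)).lt_of_ne fun h => ?_
  exact (hF x hxF).ne' (M.r_insert_eq_of_subset (M.cl_subset_of_isFlat hF hAF) h.symm)

lemma relRk_nonneg (A B : Finset N) : 0 ≤ M.relRk A B :=
  sub_nonneg.mpr (M.r_mono subset_union_right)

lemma relRk_eq_zero_of_subset {A B : Finset N} (h : A ⊆ B) : M.relRk A B = 0 := by
  simp [relRk, union_eq_right.mpr h]

lemma subset_of_relRk_eq_zero {A B : Finset N} (hB : M.IsFlat B) (h : M.relRk A B = 0) :
    A ⊆ B := by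
  intro a ha
  by_contra haB
  have := M.r_mono (insert_subset (mem_union_left B ha) (subset_union_right (s₁ := A)))
  linarith [hB a haB, show M.r (A ∪ B) = M.r B by unfold relRk at h; linarith]

lemma relRk_mono_left {A A' : Finset N} (h : A ⊆ A') (B : Finset N) :
    M.relRk A B ≤ M.relRk A' B :=
  sub_le_sub_right (M.r_mono (union_subset_union h subset_rfl)) _

lemma relRk_anti_right (A : Finset N) {B B' : Finset N} (h : B ⊆ B') :
    M.relRk A B' ≤ M.relRk A B := by
  have hs := M.submodular (A ∪ B) B'
  rw [union_assoc, union_eq_right.mpr h] at hs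
  have := M.r_mono (subset_inter (subset_union_right (s₁ := A)) h)
  unfold relRk
  linarith

lemma relRk_union_left (A A' B : Finset N) :
    M.relRk (A ∪ A') B = M.relRk A (A' ∪ B) + M.relRk A' B := by
  simp only [relRk, union_assoc]
  ring

lemma relRk_cl_right (A X : Finset N) : M.relRk A (M.cl X) = M.relRk A X := by
  simp only [relRk, r_union_cl, r_cl]

lemma relRk_cl_union_of_subset {A₀ A : Finset N} (h : A₀ ⊆ A) (B : Finset N) :
    M.relRk A (M.cl (A₀ ∪ B)) = M.relRk A B - M.relRk A₀ B := by
  have := M.relRk_union_left A A₀ B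
  rw [union_eq_left.mpr h] at this
  rw [relRk_cl_right]
  linarith

lemma relRk_union_of_subset_cl {A₀ Q B : Finset N} (h : Q ⊆ M.cl (A₀ ∪ B)) :
    M.relRk (A₀ ∪ Q) B = M.relRk A₀ B := by
  rw [union_comm, relRk_union_left, ← M.relRk_cl_right Q, M.relRk_eq_zero_of_subset h, zero_add]

lemma exists_subset_relRk_eq (A B : Finset N) {j : ℤ} (hj₀ : 0 ≤ j) (hj : j ≤ M.relRk A B) :
    ∃ A₀ ⊆ A, M.relRk A₀ B = j := by
  induction A using Finset.induction_on generalizing j with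
  | empty => exact ⟨∅, subset_rfl, by simp [relRk] at hj ⊢; omega⟩
  | insert a A _ ih =>
    by_cases hjA : j ≤ M.relRk A B
    · obtain ⟨A₀, hA₀A, hA₀⟩ := ih hj₀ hjA
      exact ⟨A₀, hA₀A.trans (subset_insert a A), hA₀⟩
    · have hle : M.relRk (insert a A) B ≤ M.relRk A B + 1 := by
        simp only [relRk, insert_union]
        linarith [M.r_insert_le a (A ∪ B)]
      refine ⟨insert a A, subset_rfl, ?_⟩
      have := M.relRk_mono_left (subset_insert a A) B
      omega

lemma isPseudoInter_cl_of_relRk_eq_zero {A B : Finset N} (hB : M.IsFlat B)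
    (h : M.relRk A B = 0) : M.IsPseudoInter A B (M.cl A) := by
  refine ⟨M.isFlat_cl A, M.cl_subset_of_isFlat hB (M.subset_of_relRk_eq_zero hB h),
    fun B₁ hB₁ _ => ?_⟩
  rw [h]
  exact ⟨fun h₁ => M.cl_subset_of_isFlat hB₁ (M.subset_of_relRk_eq_zero hB₁ h₁),
    fun h₁ => M.relRk_eq_zero_of_subset ((M.subset_cl A).trans h₁)⟩

lemma isPseudoInter_of_isPseudoInter_cl_union {A A₀ B Q C : Finset N} (hA₀A : A₀ ⊆ A)
    (hA₀ : M.relRk A B = M.relRk A₀ B + 1)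
    (hQ : M.IsPseudoInter A (M.cl (A₀ ∪ B)) Q) (hC : M.IsPseudoInter (A₀ ∪ Q) B C) :
    M.IsPseudoInter A B C := by
  obtain ⟨-, hQH, hQ⟩ := hQ
  obtain ⟨hCflat, hCB, hC⟩ := hC
  have hAH : M.relRk A (M.cl (A₀ ∪ B)) = 1 := by
    rw [M.relRk_cl_union_of_subset hA₀A]
    linarith
  have hBH : B ⊆ M.cl (A₀ ∪ B) := subset_union_right.trans (M.subset_cl _)
  refine ⟨hCflat, hCB, fun B₁ hB₁ hB₁B => ?_⟩
  rw [← hC B₁ hB₁ hB₁B, M.relRk_union_of_subset_cl hQH]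
  have hA₀B₁ := M.relRk_anti_right A₀ hB₁B
  have hAB₁ := M.relRk_anti_right A hB₁B
  constructor
  · intro hA
    have hsplit := M.relRk_anti_right A (union_subset_union (subset_refl A₀) hB₁B)
    rw [← M.relRk_cl_right A (A₀ ∪ B), ← M.relRk_cl_right A (A₀ ∪ B₁),
      M.relRk_cl_union_of_subset hA₀A, M.relRk_cl_union_of_subset hA₀A] at hsplit
    have hQX : Q ⊆ M.cl (A₀ ∪ B₁) := by
      refine (hQ _ (M.isFlat_cl _) ?_).mp ?_
      · exact M.cl_subset_of_isFlat (M.isFlat_cl _)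
          (union_subset_union (subset_refl A₀) hB₁B |>.trans (M.subset_cl _))
      · rw [hAH, M.relRk_cl_union_of_subset hA₀A]
        linarith
    rw [M.relRk_union_of_subset_cl hQX]
    linarith
  · intro hA'
    set X := M.cl (A₀ ∪ Q ∪ B₁)
    have hXH : X ⊆ M.cl (A₀ ∪ B) := M.cl_subset_of_isFlat (M.isFlat_cl _)
      (union_subset (union_subset (subset_union_left.trans (M.subset_cl _)) hQH)
        (hB₁B.trans hBH))
    have hAX : M.relRk A X = 1 := by
      rw [← hAH]
      exact (hQ X (M.isFlat_cl _) hXH).mpr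
        ((subset_union_right.trans subset_union_left).trans (M.subset_cl _))
    have hchain := M.relRk_union_left A (A₀ ∪ Q) B₁
    rw [← M.relRk_cl_right A, hAX] at hchain
    linarith [M.relRk_mono_left (subset_union_left (s₁ := A) (s₂ := A₀ ∪ Q)) B₁]

theorem exists_isPseudoInter_of_forall_relRk_eq_one
    (hM : ∀ A B, M.IsFlat B → M.relRk A B = 1 → ∃ B₀, M.IsPseudoInter A B B₀)
    (A : Finset N) {B : Finset N} (hB : M.IsFlat B) : ∃ B₀, M.IsPseudoInter A B B₀ := by
  obtain ⟨k, hk⟩ := Int.eq_ofNat_of_zero_le (M.relRk_nonneg A B)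
  induction k generalizing A with
  | zero => exact ⟨M.cl A, M.isPseudoInter_cl_of_relRk_eq_zero hB hk⟩
  | succ k ih =>
    push_cast at hk
    obtain ⟨A₀, hA₀A, hA₀⟩ :=
      M.exists_subset_relRk_eq A B (j := k) (by positivity) (by omega)
    obtain ⟨Q, hQ⟩ := hM A (M.cl (A₀ ∪ B)) (M.isFlat_cl _)
      (by rw [M.relRk_cl_union_of_subset hA₀A]; omega)
    obtain ⟨C, hC⟩ := ih (A₀ ∪ Q) (by rw [M.relRk_union_of_subset_cl hQ.2.1, hA₀])
    exact ⟨C, M.isPseudoInter_of_isPseudoInter_cl_union hA₀A (by omega) hQ hC⟩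

end FinMatroid

/-- If a finite matroid `M` is not pseudomodular, then there exist a flat `B` and a
subset `A` of the ground set with `r(A/B) = 1` such that `A` has no
pseudointersection with `B`. -/
theorem not_pseudomodular_exists_relRk_one {N : Type} [Fintype N] [DecidableEq N]
    (M : FinMatroid N) (h : ¬ M.Pseudomodular) :
    ∃ (B A : Finset N), M.IsFlat B ∧ M.relRk A B = 1 ∧
      ¬ ∃ B₀, M.IsPseudoInter A B B₀ := by
  by_contra hM
  refine h fun A B _ hB =>
    M.exists_isPseudoInter_of_forall_relRk_eq_one (fun A B hB hAB => ?_) A hB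
  by_contra hA
  exact hM ⟨B, A, hB, hAB, hA⟩
end

section
/- Every finite matroid that is totally flat is pseudomodular. (In the paper this is stated as: every strict gammoid is pseudomodular, via the characterization of finite strict gammoids as the totally flat matroids.) -/
/-!
Fix flats `A` and `B`. The flats `X ⊆ B` with `r(A/X) = r(A/B)` include `B` and are closed under
intersection, so their intersection is the least of them, and that is the pseudointersection.
For closure under intersection, enlarge `A ∪ X` and `A ∪ Y` to flats `G₁`, `G₂` of the same rank;
then `G₁ ∩ B = X` and `G₂ ∩ B = Y`, and `Δ(G₁, G₂, B) ≤ 0` rearranges to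
`r(A/(X ∩ Y)) ≤ r(A/B)`, while the reverse inequality is submodularity.
-/

theorem InfClosed.exists_isLeast {α : Type*} [SemilatticeInf α] {s : Set α} (hs : InfClosed s)
    (hfin : s.Finite) (hne : s.Nonempty) : ∃ a, IsLeast s a := by
  obtain ⟨a, ha, hmin⟩ := hfin.exists_minimal hne
  exact ⟨a, ha, fun b hb => (hmin (hs ha hb) inf_le_left).trans inf_le_right⟩

namespace FinMatroid

variable {N : Type} [Fintype N] [DecidableEq N] {M : FinMatroid N}

theorem delta_three (M : FinMatroid N) (X Y Z : Finset N) :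
    M.delta ![X, Y, Z] = M.r (X ∪ Y ∪ Z) - M.r X - M.r Y - M.r Z
      + M.r (X ∩ Y) + M.r (X ∩ Z) + M.r (Y ∩ Z) - M.r (X ∩ Y ∩ Z) := by
  rw [delta, show (Finset.univ : Finset (Finset (Fin 3))) =
      {∅, {0}, {1}, {2}, {0, 1}, {0, 2}, {1, 2}, {0, 1, 2}} by decide,
    show (Finset.univ : Finset (Fin 3)) = {0, 1, 2} by decide]
  simp +decide [Finset.sum_insert, Finset.union_assoc, Finset.inter_assoc]
  ring

theorem r_lt_r_insert_of_subset_isFlat {F X : Finset N} {n : N} (hF : M.IsFlat F)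
    (hXF : X ⊆ F) (hn : n ∉ F) : M.r X < M.r (insert n X) := by
  have hsub := M.submodular (insert n X) F
  rw [Finset.insert_union, Finset.union_eq_right.2 hXF, Finset.insert_inter_of_notMem hn,
    Finset.inter_eq_left.2 hXF] at hsub
  have := hF n hn
  omega

theorem IsFlat.inter {F G : Finset N} (hF : M.IsFlat F) (hG : M.IsFlat G) :
    M.IsFlat (F ∩ G) := by
  intro n hn
  rcases not_and_or.1 (Finset.mem_inter.not.1 hn) with hnF | hnG
  · exact r_lt_r_insert_of_subset_isFlat hF Finset.inter_subset_left hnF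
  · exact r_lt_r_insert_of_subset_isFlat hG Finset.inter_subset_right hnG

theorem IsFlat.eq_of_subset_of_r_le {X Y : Finset N} (hX : M.IsFlat X) (hXY : X ⊆ Y)
    (hr : M.r Y ≤ M.r X) : Y = X := by
  refine (Finset.Subset.antisymm hXY fun n hnY => ?_).symm
  by_contra hnX
  have := M.r_mono (Finset.insert_subset hnY hXY)
  have := hX n hnX
  omega

theorem exists_isFlat_superset_r_eq (M : FinMatroid N) (A : Finset N) :
    ∃ F, M.IsFlat F ∧ A ⊆ F ∧ M.r F = M.r A := by
  obtain ⟨F, hF, hmax⟩ := (Finset.univ.filter fun F => A ⊆ F ∧ M.r F = M.r A).exists_max_image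
    Finset.card ⟨A, by simp⟩
  simp only [Finset.mem_filter, Finset.mem_univ, true_and] at hF hmax
  refine ⟨F, fun n hn => ?_, hF⟩
  by_contra hle
  have hr : M.r (insert n F) = M.r A :=
    (le_antisymm (not_lt.1 hle) (M.r_mono (Finset.subset_insert n F))).trans hF.2
  have := hmax (insert n F) ⟨hF.1.trans (Finset.subset_insert n F), hr⟩
  rw [Finset.card_insert_of_notMem hn] at this
  omega

theorem relRk_antitone (M : FinMatroid N) (A : Finset N) : Antitone (M.relRk A) := by
  intro X Y hXY
  have hsub := M.submodular (A ∪ X) Y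
  rw [Finset.union_assoc, Finset.union_eq_right.2 hXY] at hsub
  have := M.r_mono (Finset.subset_inter Finset.subset_union_right hXY : X ⊆ (A ∪ X) ∩ Y)
  unfold relRk
  omega

theorem inter_eq_of_relRk_eq {A B X G : Finset N} (hX : M.IsFlat X) (hXB : X ⊆ B)
    (hG : A ∪ X ⊆ G) (hrG : M.r G = M.r (A ∪ X)) (hrX : M.relRk A X = M.relRk A B) :
    G ∩ B = X := by
  have hXGB : X ⊆ G ∩ B := Finset.subset_inter (Finset.subset_union_right.trans hG) hXB
  refine hX.eq_of_subset_of_r_le hXGB ?_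
  have hAGB : M.r (A ∪ G ∩ B) ≤ M.r G :=
    M.r_mono (Finset.union_subset (Finset.subset_union_left.trans hG) Finset.inter_subset_left)
  have hanti := M.relRk_antitone A (Finset.inter_subset_right : G ∩ B ⊆ B)
  unfold relRk at hanti hrX
  omega

theorem NFlat.relRk_inter_eq (h : M.NFlat 3) {A B X Y : Finset N} (hB : M.IsFlat B)
    (hX : M.IsFlat X) (hY : M.IsFlat Y) (hXB : X ⊆ B) (hYB : Y ⊆ B)
    (hrX : M.relRk A X = M.relRk A B) (hrY : M.relRk A Y = M.relRk A B) :
    M.relRk A (X ∩ Y) = M.relRk A B := by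
  obtain ⟨G₁, hG₁, hAXG₁, hrG₁⟩ := M.exists_isFlat_superset_r_eq (A ∪ X)
  obtain ⟨G₂, hG₂, hAYG₂, hrG₂⟩ := M.exists_isFlat_superset_r_eq (A ∪ Y)
  have hG₁B : G₁ ∩ B = X := inter_eq_of_relRk_eq hX hXB hAXG₁ hrG₁ hrX
  have hG₂B : G₂ ∩ B = Y := inter_eq_of_relRk_eq hY hYB hAYG₂ hrG₂ hrY
  have hΔ : M.delta ![G₁, G₂, B] ≤ 0 :=
    h (Fin 3) inferInstance inferInstance _ (by simp) (by intro i; fin_cases i <;> assumption)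
  rw [delta_three, Finset.inter_inter_distrib_right, hG₁B, hG₂B] at hΔ
  have hAG₁ : A ⊆ G₁ := Finset.subset_union_left.trans hAXG₁
  have hAG₂ : A ⊆ G₂ := Finset.subset_union_left.trans hAYG₂
  have hjoin : M.r (A ∪ B) ≤ M.r (G₁ ∪ G₂ ∪ B) :=
    M.r_mono (Finset.union_subset_union (hAG₁.trans Finset.subset_union_left) le_rfl)
  have hmeet : M.r (A ∪ X ∩ Y) ≤ M.r (G₁ ∩ G₂) :=
    M.r_mono (Finset.union_subset (Finset.subset_inter hAG₁ hAG₂)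
      (Finset.inter_subset_inter (Finset.subset_union_right.trans hAXG₁)
        (Finset.subset_union_right.trans hAYG₂)))
  have hanti := M.relRk_antitone A (Finset.inter_subset_left.trans hXB : X ∩ Y ⊆ B)
  unfold relRk at hrX hrY hanti ⊢
  omega

theorem isPseudoInter_of_isLeast {A B B₀ : Finset N}
    (h : IsLeast {X | M.IsFlat X ∧ X ⊆ B ∧ M.relRk A X = M.relRk A B} B₀) :
    M.IsPseudoInter A B B₀ := by
  obtain ⟨⟨hB₀, hB₀B, hrB₀⟩, hleast⟩ := h
  refine ⟨hB₀, hB₀B, fun B₁ hB₁ hB₁B => ⟨fun hr => hleast ⟨hB₁, hB₁B, hr⟩, fun hB₀B₁ => ?_⟩⟩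
  exact le_antisymm ((M.relRk_antitone A hB₀B₁).trans hrB₀.le) (M.relRk_antitone A hB₁B)

theorem NFlat.pseudomodular (h : M.NFlat 3) : M.Pseudomodular := by
  intro A B _ hB
  have hinter : InfClosed {X | M.IsFlat X ∧ X ⊆ B ∧ M.relRk A X = M.relRk A B} :=
    fun X ⟨hX, hXB, hrX⟩ Y ⟨hY, hYB, hrY⟩ =>
      ⟨hX.inter hY, Finset.inter_subset_left.trans hXB, h.relRk_inter_eq hB hX hY hXB hYB hrX hrY⟩
  obtain ⟨B₀, hB₀⟩ := hinter.exists_isLeast (Set.toFinite _) ⟨B, hB, subset_rfl, rfl⟩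
  exact ⟨B₀, isPseudoInter_of_isLeast hB₀⟩

theorem TotallyFlat.nFlat (h : M.TotallyFlat) (n : ℕ) : M.NFlat n :=
  fun ι _ _ F _ hF => h ι _ _ F hF

end FinMatroid

/-- Every finite matroid that is totally flat (equivalently, every finite strict
gammoid) is pseudomodular. -/
theorem pseudomodular_of_totallyFlat {N : Type} [Fintype N] [DecidableEq N]
    (M : FinMatroid N) (h : M.TotallyFlat) : M.Pseudomodular :=
  (h.nFlat 3).pseudomodular
end

section
/- Let C = (F_i)_{i ∈ I} be a finite family of flats of a matroid M, and suppose there are indices i ≠ j in I with F_i ⊆ F_j. Then Δ(C) = Δ(C \ {F_i}), where C \ {F_i} is the family obtained by deleting the member indexed by i. -/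
namespace Finset

variable {ι α R : Type*} [DecidableEq ι]

theorem sum_powerset_neg_one_pow_card_mul_inf_insert_eq_zero [SemilatticeInf α] [OrderTop α]
    [CommRing R] (g : α → R) {F : ι → α} {s : Finset ι} {i j : ι} (hi : i ∉ s) (hj : j ∈ s)
    (hle : F i ≤ F j) :
    ∑ T ∈ s.powerset, (-1 : R) ^ #(insert i T) * g ((insert i T).inf F) = 0 := by
  rw [← insert_erase hj, sum_powerset_insert (notMem_erase j s), ← sum_add_distrib]
  refine sum_eq_zero fun T hT => ?_
  have hjT : j ∉ insert i T := by
    rw [mem_insert, not_or]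
    exact ⟨fun h => hi (h ▸ hj), notMem_mono (mem_powerset.1 hT) (notMem_erase j s)⟩
  have hinf : (insert j (insert i T)).inf F = (insert i T).inf F := by
    rw [inf_insert, inf_eq_right]
    exact (inf_le (mem_insert_self i T)).trans hle
  rw [insert_comm, card_insert_of_notMem hjT, hinf, pow_succ]
  ring

variable [Fintype ι]

theorem sum_univ_eq_sum_powerset_erase_add_sum_insert [AddCommMonoid R] (i : ι)
    (f : Finset ι → R) :
    ∑ S : Finset ι, f S =
      ∑ T ∈ (univ.erase i).powerset, f T + ∑ T ∈ (univ.erase i).powerset, f (insert i T) := by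
  rw [← sum_powerset_insert (notMem_erase i univ), insert_erase (mem_univ i), powerset_univ]

theorem sum_powerset_erase_univ_eq_sum_subtype [AddCommMonoid R] (i : ι) (f : Finset ι → R) :
    ∑ T ∈ (univ.erase i).powerset, f T =
      ∑ T : Finset {x // x ≠ i}, f (T.map (Function.Embedding.subtype _)) := by
  rw [sum_subtype _ (p := fun T : Finset ι => ∀ x ∈ T, x ≠ i) (by simp [subset_iff]),
    ← (Equiv.finsetSubtypeComm _).sum_comp]
  rfl

theorem sup_univ_subtype_ne_of_le [SemilatticeSup α] [OrderBot α] {F : ι → α} {i j : ι}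
    (hij : i ≠ j) (hle : F i ≤ F j) :
    (univ : Finset {x // x ≠ i}).sup (fun x => F x) = univ.sup F := by
  refine le_antisymm (Finset.sup_le fun x _ => le_sup (mem_univ _)) (Finset.sup_le fun k _ => ?_)
  by_cases hk : k = i
  · subst hk
    exact hle.trans (le_sup (f := fun x : {x // x ≠ k} => F x) (mem_univ ⟨j, hij.symm⟩))
  · exact le_sup (f := fun x : {x // x ≠ i} => F x) (mem_univ ⟨k, hk⟩)

end Finset

open Finset in
theorem delta_delete_subset_general {N : Type} [Fintype N] [DecidableEq N]
    (M : FinMatroid N) {ι : Type} [Fintype ι] [DecidableEq ι]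
    (F : ι → Finset N)
    {i j : ι} (hij : i ≠ j) (hsub : F i ⊆ F j) :
    M.delta F = M.delta (fun x : {x : ι // x ≠ i} => F x.1) := by
  rw [FinMatroid.delta, FinMatroid.delta, sum_univ_eq_sum_powerset_erase_add_sum_insert i]
  simp only [insert_nonempty, if_true]
  rw [sum_powerset_neg_one_pow_card_mul_inf_insert_eq_zero M.r (notMem_erase i univ)
      (mem_erase.2 ⟨hij.symm, mem_univ j⟩) hsub, add_zero, sum_powerset_erase_univ_eq_sum_subtype]
  refine sum_congr rfl fun T _ => ?_
  simp only [card_map, map_nonempty, inf_map, sup_univ_subtype_ne_of_le hij hsub]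
  rfl

/-- If a finite family of flats `C = (F_i)` has two members `F_i ⊆ F_j` with `i ≠ j`,
then `Δ(C) = Δ(C \ {F_i})`, where the member indexed by `i` has been deleted. -/
theorem delta_delete_subset {N : Type} [Fintype N] [DecidableEq N]
    (M : FinMatroid N) {ι : Type} [Fintype ι] [DecidableEq ι]
    (F : ι → Finset N) (hF : ∀ i, M.IsFlat (F i))
    {i j : ι} (hij : i ≠ j) (hsub : F i ⊆ F j) :
    M.delta F = M.delta (fun x : {x : ι // x ≠ i} => F x.1) :=
  delta_delete_subset_general M F hij hsub
end

section
/- Let C be a finite family of flats of a matroid M. Then there exists a finite family C' of flats of M with |C'| = |C|, Δ(C') ≥ Δ(C), and every member of C' a cyclic flat of M. -/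
/-! A flat `F i` that is not cyclic has a coloop `e`, and `F i \ e` is again a flat. Deleting `e`
from `F i` lowers `r(F_S)` by exactly one for the nonempty `S ∋ i` with `e ∈ F_S` and leaves the
other nonempty intersections alone; by inclusion–exclusion over `{j | e ∈ F j}` these changes add
`1` to `Δ` exactly when `F i` is the only member containing `e`, which is also the only case in
which the rank of the union can drop, and then by at most one. So `Δ` does not decrease, and
iterating on `∑ |F i|` ends with a family of cyclic flats. -/

namespace Finset

lemma inf_update_of_notMem {ι α : Type*} [DecidableEq ι] [SemilatticeInf α] [OrderTop α]
    (F : ι → α) {i : ι} (a : α) {S : Finset ι} (hi : i ∉ S) :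
    S.inf (Function.update F i a) = S.inf F :=
  inf_congr rfl fun _ hj => Function.update_of_ne (ne_of_mem_of_not_mem hj hi) _ F

lemma sum_filter_mem_powerset_neg_one_pow_card {ι : Type*} [DecidableEq ι]
    {T : Finset ι} {i : ι} (hi : i ∈ T) :
    ∑ S ∈ T.powerset with i ∈ S, (-1 : ℤ) ^ S.card = -if T = {i} then 1 else 0 := by
  have hsplit : {S ∈ T.powerset | i ∈ S} = T.powerset \ (T.erase i).powerset := by
    ext S
    simp only [mem_filter, mem_sdiff, mem_powerset, subset_erase]
    tauto
  rw [hsplit, sum_sdiff_eq_sub (powerset_mono.2 (erase_subset i T)),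
    sum_powerset_neg_one_pow_card, sum_powerset_neg_one_pow_card,
    if_neg (ne_empty_of_mem hi), zero_sub]
  simp only [erase_eq_empty_iff, ne_empty_of_mem hi, false_or]

variable {ι α : Type*} [DecidableEq ι] [DecidableEq α]

lemma inf_update_erase [Fintype α] (F : ι → Finset α) {i : ι} (e : α) {S : Finset ι}
    (hi : i ∈ S) : S.inf (Function.update F i ((F i).erase e)) = (S.inf F).erase e := by
  ext x
  simp only [mem_inf, mem_erase, Function.update_apply]
  grind

lemma sup_subset_insert_sup_update_erase (F : ι → Finset α) (s : Finset ι) (i : ι) (e : α) :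
    s.sup F ⊆ insert e (s.sup (Function.update F i ((F i).erase e))) := by
  intro x
  simp only [mem_sup, mem_insert, Function.update_apply]
  grind

lemma sup_update_erase_of_mem (F : ι → Finset α) {s : Finset ι} {i j : ι} {e : α}
    (hjs : j ∈ s) (hji : j ≠ i) (hej : e ∈ F j) :
    s.sup (Function.update F i ((F i).erase e)) = s.sup F := by
  ext x
  simp only [mem_sup, Function.update_apply]
  grind

lemma sum_card_update_erase_lt [Fintype ι] (F : ι → Finset α) {i : ι} {e : α}
    (he : e ∈ F i) :
    ∑ j, (Function.update F i ((F i).erase e) j).card < ∑ j, (F j).card := by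
  refine sum_lt_sum (fun j _ => card_le_card ?_)
    ⟨i, mem_univ i, by simpa using card_erase_lt_of_mem he⟩
  rcases eq_or_ne j i with rfl | hji <;> simp [*, erase_subset]

end Finset

namespace FinMatroid

variable {N : Type} [Fintype N] [DecidableEq N] (M : FinMatroid N)

lemma r_insert_sub_le_of_subset {X Y : Finset N} {n : N} (hXY : X ⊆ Y) (hn : n ∉ Y) :
    M.r (insert n Y) - M.r Y ≤ M.r (insert n X) - M.r X := by
  have h := M.submodular (insert n X) Y
  rw [Finset.insert_union, Finset.union_eq_right.2 hXY, Finset.insert_inter_of_notMem hn,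
    Finset.inter_eq_left.2 hXY] at h
  linarith

lemma r_insert_le_add_one (A : Finset N) (n : N) : M.r (insert n A) ≤ M.r A + 1 := by
  by_cases hn : n ∈ A
  · rw [Finset.insert_eq_of_mem hn]
    linarith
  · have h := M.r_insert_sub_le_of_subset (Finset.empty_subset A) hn
    have h₁ := M.r_le_card {n}
    have h₀ := M.r_nonneg ∅
    simp only [insert_empty_eq, Finset.card_singleton, Nat.cast_one] at h h₁
    linarith

lemma r_le_r_erase_add_one (A : Finset N) (e : N) : M.r A ≤ M.r (A.erase e) + 1 :=
  (M.r_mono (Finset.insert_erase_subset e A)).trans (M.r_insert_le_add_one _ e)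

lemma r_erase_lt_of_subset {A B : Finset N} {e : N} (he : e ∈ B) (hBA : B ⊆ A)
    (hA : M.r (A.erase e) < M.r A) : M.r (B.erase e) < M.r B := by
  have h := M.r_insert_sub_le_of_subset (Finset.erase_subset_erase e hBA)
    (Finset.notMem_erase e A)
  rw [Finset.insert_erase (hBA he), Finset.insert_erase he] at h
  linarith

lemma isFlat_erase {A : Finset N} {e : N} (hA : M.IsFlat A) (hc : M.r (A.erase e) < M.r A) :
    M.IsFlat (A.erase e) := by
  have he : e ∈ A := by
    by_contra he
    rw [Finset.erase_eq_of_notMem he] at hc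
    exact lt_irrefl _ hc
  intro n hn
  by_cases hne : n = e
  · subst hne
    rwa [Finset.insert_erase he]
  · have hnA : n ∉ A := fun h => hn (Finset.mem_erase.2 ⟨hne, h⟩)
    have h := M.r_insert_sub_le_of_subset (Finset.erase_subset e A) hnA
    linarith [hA n hnA]

lemma exists_r_erase_lt_of_not_cyclic {A : Finset N} (h : ¬ M.Cyclic A) :
    ∃ e ∈ A, M.r (A.erase e) < M.r A := by
  simp only [Cyclic, not_forall] at h
  obtain ⟨e, he, hne⟩ := h
  exact ⟨e, he, lt_of_le_of_ne (M.r_mono (Finset.erase_subset e A)) hne⟩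

lemma r_inf_update_erase {ι : Type} [DecidableEq ι] {F : ι → Finset N} {i : ι} {e : N}
    (hc : M.r ((F i).erase e) < M.r (F i)) {S : Finset ι} (hi : i ∈ S) :
    M.r (S.inf (Function.update F i ((F i).erase e))) =
      M.r (S.inf F) - if e ∈ S.inf F then 1 else 0 := by
  rw [Finset.inf_update_erase F e hi]
  split_ifs with he
  · have := M.r_erase_lt_of_subset he (Finset.inf_le hi) hc
    linarith [M.r_le_r_erase_add_one (S.inf F) e]
  · rw [Finset.erase_eq_of_notMem he, sub_zero]

lemma isFlat_update_erase {ι : Type} [DecidableEq ι] {F : ι → Finset N}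
    (hF : ∀ j, M.IsFlat (F j)) {i : ι} {e : N} (hc : M.r ((F i).erase e) < M.r (F i)) (j : ι) :
    M.IsFlat (Function.update F i ((F i).erase e) j) := by
  rw [Function.update_apply]
  split_ifs with hji
  · subst hji
    exact M.isFlat_erase (hF j) hc
  · exact hF j

lemma delta_update_erase {ι : Type} [Fintype ι] [DecidableEq ι] {F : ι → Finset N}
    {i : ι} {e : N} (he : e ∈ F i) (hc : M.r ((F i).erase e) < M.r (F i)) :
    M.delta (Function.update F i ((F i).erase e)) = M.delta F
      + (M.r (Finset.univ.sup (Function.update F i ((F i).erase e))) - M.r (Finset.univ.sup F))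
      + if ({j | e ∈ F j} : Finset ι) = {i} then 1 else 0 := by
  set G := Function.update F i ((F i).erase e)
  set T : Finset ι := {j | e ∈ F j}
  set u := M.r (Finset.univ.sup G) - M.r (Finset.univ.sup F)
  have hiT : i ∈ T := Finset.mem_filter.2 ⟨Finset.mem_univ i, he⟩
  have hterm : ∀ S : Finset ι,
      (-1 : ℤ) ^ S.card * M.r (if S.Nonempty then S.inf G else Finset.univ.sup G) =
        (-1 : ℤ) ^ S.card * M.r (if S.Nonempty then S.inf F else Finset.univ.sup F)
          + (if S = ∅ then u else 0)
          - (if S ∈ {S' ∈ T.powerset | i ∈ S'} then (-1 : ℤ) ^ S.card else 0) := by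
    intro S
    rcases S.eq_empty_or_nonempty with rfl | hS
    · simp [u]
    have hST : e ∈ S.inf F ↔ S ⊆ T := by
      simp only [Finset.mem_inf, Finset.subset_iff, T, Finset.mem_filter, Finset.mem_univ,
        true_and]
    simp only [if_pos hS, if_neg hS.ne_empty, Finset.mem_filter, Finset.mem_powerset, add_zero]
    by_cases hiS : i ∈ S
    · rw [M.r_inf_update_erase hc hiS]
      simp only [hST, hiS, and_true]
      split_ifs <;> ring
    · rw [Finset.inf_update_of_notMem F _ hiS]
      simp [hiS]
  simp only [delta, hterm, Finset.sum_add_distrib, Finset.sum_sub_distrib, Finset.sum_ite_eq',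
    Finset.mem_univ, if_true, ← Finset.sum_filter, Finset.filter_mem_eq_inter, Finset.univ_inter,
    Finset.sum_filter_mem_powerset_neg_one_pow_card hiT]
  ring

lemma delta_le_delta_update_erase {ι : Type} [Fintype ι] [DecidableEq ι] {F : ι → Finset N}
    {i : ι} {e : N} (he : e ∈ F i) (hc : M.r ((F i).erase e) < M.r (F i)) :
    M.delta F ≤ M.delta (Function.update F i ((F i).erase e)) := by
  rw [M.delta_update_erase he hc]
  split_ifs with hT
  · linarith [M.r_mono (Finset.sup_subset_insert_sup_update_erase F Finset.univ i e),
      M.r_insert_le_add_one (Finset.univ.sup (Function.update F i ((F i).erase e))) e]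
  · obtain ⟨j, hjT, hji⟩ : ∃ j ∈ ({j | e ∈ F j} : Finset ι), j ≠ i := by
      by_contra! h
      exact hT (Finset.eq_singleton_iff_unique_mem.2
        ⟨Finset.mem_filter.2 ⟨Finset.mem_univ i, he⟩, h⟩)
    rw [Finset.sup_update_erase_of_mem F (Finset.mem_univ j) hji (Finset.mem_filter.1 hjT).2]
    linarith

end FinMatroid

/-- For any finite family `C` of flats of a matroid `M`, there is a family `C'` of the
same cardinality, with `Δ(C') ≥ Δ(C)`, all of whose members are cyclic flats. -/
theorem delta_le_delta_cyclic {N : Type} [Fintype N] [DecidableEq N]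
    (M : FinMatroid N) {ι : Type} [Fintype ι] [DecidableEq ι]
    (F : ι → Finset N) (hF : ∀ i, M.IsFlat (F i)) :
    ∃ F' : ι → Finset N, (∀ i, M.IsFlat (F' i) ∧ M.Cyclic (F' i)) ∧
      M.delta F ≤ M.delta F' := by
  induction hn : ∑ i, (F i).card using Nat.strong_induction_on generalizing F with
  | _ n ih =>
    by_cases hcyc : ∀ i, M.Cyclic (F i)
    · exact ⟨F, fun i => ⟨hF i, hcyc i⟩, le_rfl⟩
    obtain ⟨i, hi⟩ := not_forall.1 hcyc
    obtain ⟨e, he, hc⟩ := M.exists_r_erase_lt_of_not_cyclic hi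
    obtain ⟨F', hF', hle⟩ := ih _ (hn ▸ Finset.sum_card_update_erase_lt F he) _
      (M.isFlat_update_erase hF hc) rfl
    exact ⟨F', hF', (M.delta_le_delta_update_erase he hc).trans hle⟩
end

section
/- For every integer n ≥ 2 there exists a finite matroid M with flatness degree exactly n; that is, M is n-flat, but there exists a family C of at most n+1 flats of M with Δ(C) > 0. -/
/-!
Write `ν(A) = |A| - r(A)` for the nullity. Repeated members do not change `Δ`, so only sets `C`
of flats matter. `Δ` is linear in the rank function and vanishes for `A ↦ |A|` by
inclusion–exclusion; hence, if points are independent and the members of `C` pairwise meet in at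
most one point, `Δ(C) = ∑_{F ∈ C} ν(F) - ν(⋃ C)`.

For `n ≥ 3` take the rank-3 paving matroid on the points `aᵢ = inl i`, `bᵢ = inr i` (`i : ℤ/n`)
whose only lines with more than two points are the hub `{aᵢ}` and the rims `{aᵢ, bᵢ, bᵢ₊₁}`.
All `n + 1` of them give `Δ = (n - 2) + n - (2n - 3) = 1`. For between two and `n` of them the
union has rank 3, and `k` rims short of all `n` cover at least `k + 1` of the points `bᵢ`, which
makes `|⋃ C| - 3 ≥ ∑ ν`; proper flats that are not lines have nullity 0 and can be discarded.

For `n = 2` every matroid is 2-flat by submodularity, and the three planes `{0,1,2,3}`,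
`{0,1,4,5}`, `{2,3,4,5}` of a rank-4 paving matroid on six points give `Δ = 4 - 9 + 6 - 0 = 1`.
-/

namespace FinMatroid

section deltaOf

variable {N : Type} [Fintype N] [DecidableEq N] {ι : Type}

def deltaOf (f : Finset N → ℤ) (s : Finset ι) (F : ι → Finset N) : ℤ :=
  ∑ S ∈ s.powerset, (-1 : ℤ) ^ S.card * f (if S.Nonempty then S.inf F else s.sup F)

lemma delta_eq_deltaOf (M : FinMatroid N) [Fintype ι] [DecidableEq ι] (F : ι → Finset N) :
    M.delta F = deltaOf M.r Finset.univ F := by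
  simp [delta, deltaOf]

lemma deltaOf_sub (f g : Finset N → ℤ) (s : Finset ι) (F : ι → Finset N) :
    deltaOf (f - g) s F = deltaOf f s F - deltaOf g s F := by
  simp only [deltaOf, Pi.sub_apply, mul_sub, Finset.sum_sub_distrib]

lemma deltaOf_eq_zero_of_forall_subset [DecidableEq ι] {f : Finset N → ℤ} {s : Finset ι}
    {F : ι → Finset N} {i : ι} (hi : i ∈ s) (h : ∀ j ∈ s, F j ⊆ F i) : deltaOf f s F = 0 := by
  have hsup : s.sup F = F i := le_antisymm (Finset.sup_le h) (Finset.le_sup hi)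
  rw [deltaOf, hsup, ← Finset.insert_erase hi,
    Finset.sum_powerset_insert (Finset.notMem_erase i s), ← Finset.sum_add_distrib]
  refine Finset.sum_eq_zero fun t ht => ?_
  have hit : i ∉ t := fun h => Finset.notMem_erase i s (Finset.mem_powerset.1 ht h)
  rw [Finset.card_insert_of_notMem hit, if_pos (Finset.insert_nonempty i t), Finset.inf_insert]
  rcases t.eq_empty_or_nonempty with rfl | hne
  · simp
  · have : F i ⊓ t.inf F = t.inf F := inf_eq_right.2 <| by
      obtain ⟨j, hj⟩ := hne
      exact (Finset.inf_le hj).trans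
        (h j (Finset.mem_of_mem_erase (Finset.mem_powerset.1 ht hj)))
    rw [if_pos hne, this, pow_succ]
    ring

lemma deltaOf_insert_of_subset [DecidableEq ι] {f : Finset N → ℤ} {s : Finset ι}
    {F : ι → Finset N} {i j : ι} (hi : i ∈ s) (hj : j ∉ s) (hle : F j ⊆ F i) :
    deltaOf f (insert j s) F = deltaOf f s F := by
  have hsup : (insert j s).sup F = s.sup F := by
    rw [Finset.sup_insert]; exact sup_eq_right.2 (hle.trans (Finset.le_sup hi))
  simp only [deltaOf]
  rw [hsup, Finset.sum_powerset_insert hj, add_eq_left, ← Finset.insert_erase hi,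
    Finset.sum_powerset_insert (Finset.notMem_erase i s), ← Finset.sum_add_distrib]
  refine Finset.sum_eq_zero fun t ht => ?_
  have ht' := Finset.mem_powerset.1 ht
  have hit : i ∉ t := fun h => Finset.notMem_erase i s (ht' h)
  have hjt : j ∉ insert i t := by
    rw [Finset.mem_insert]
    rintro (rfl | h)
    · exact hj hi
    · exact hj (Finset.mem_of_mem_erase (ht' h))
  have hinf : (insert j (insert i t)).inf F = (insert j t).inf F := by
    simp only [Finset.inf_insert, ← inf_assoc, inf_eq_left.2 hle]
  rw [hinf, Finset.card_insert_of_notMem hjt, Finset.card_insert_of_notMem hit,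
    Finset.card_insert_of_notMem (fun h => hjt (Finset.mem_insert_of_mem h)),
    if_pos (Finset.insert_nonempty _ _), if_pos (Finset.insert_nonempty _ _), pow_succ]
  ring

lemma deltaOf_image_of_injOn (f : Finset N → ℤ) {s : Finset ι} {F : ι → Finset N}
    (hF : Set.InjOn F s) : deltaOf f s F = deltaOf f (s.image F) id := by
  rw [deltaOf, deltaOf, Finset.powerset_image,
    Finset.sum_image (Finset.image_injOn_powerset_of_injOn hF), Finset.sup_image]
  refine Finset.sum_congr rfl fun S hS => ?_
  simp only [Finset.card_image_of_injOn (hF.mono (Finset.mem_powerset.1 hS)),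
    Finset.image_nonempty, Finset.inf_image, Function.id_comp]

lemma deltaOf_image [DecidableEq ι] (f : Finset N → ℤ) (s : Finset ι) (F : ι → Finset N) :
    deltaOf f s F = deltaOf f (s.image F) id := by
  induction s using Finset.strongInduction with
  | H s ih =>
  by_cases hF : Set.InjOn F s
  · exact deltaOf_image_of_injOn f hF
  obtain ⟨i, hi, j, hj, hFij, hij⟩ : ∃ i ∈ s, ∃ j ∈ s, F i = F j ∧ i ≠ j := by
    simpa [Set.InjOn] using hF
  have hi' : i ∈ s.erase j := Finset.mem_erase.2 ⟨hij, hi⟩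
  have himage : (s.erase j).image F = s.image F := by
    conv_rhs => rw [← Finset.insert_erase hj]
    rw [Finset.image_insert, ← hFij, Finset.insert_eq_of_mem (Finset.mem_image_of_mem F hi')]
  conv_lhs => rw [← Finset.insert_erase hj]
  rw [deltaOf_insert_of_subset hi' (Finset.notMem_erase j s) hFij.ge,
    ih _ (Finset.erase_ssubset hj), himage]

lemma deltaOf_pair (f : Finset N → ℤ) {A B : Finset N} (hAB : A ≠ B) :
    deltaOf f {A, B} id = f (A ∪ B) + f (A ∩ B) - f A - f B := by
  rw [deltaOf, Finset.sum_powerset_insert (by simpa using hAB)]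
  have hB : ({B} : Finset (Finset N)).powerset = {∅, {B}} := by
    ext; simp [Finset.subset_singleton_iff]
  simp [hB, Finset.sum_pair (Finset.singleton_ne_empty B).symm, Finset.card_pair hAB]
  ring

lemma deltaOf_card (s : Finset ι) (F : ι → Finset N) :
    deltaOf (fun A => (A.card : ℤ)) s F = 0 := by
  have hIE := Finset.inclusion_exclusion_card_inf_compl s F
  rw [← Finset.compl_sup, Finset.card_compl] at hIE
  have hdiff : deltaOf (fun A => (A.card : ℤ)) s F -
      ∑ S ∈ s.powerset, (-1 : ℤ) ^ S.card * (S.inf F).card =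
      (s.sup F).card - Fintype.card N := by
    rw [deltaOf, ← Finset.sum_sub_distrib, Finset.sum_eq_single ∅]
    · simp
    · intro S _ hS
      simp [Finset.nonempty_iff_ne_empty.2 hS]
    · simp
  have := Finset.card_le_univ (s.sup F)
  omega

lemma deltaOf_eq_sub_sum {f : Finset N → ℤ} (hf : ∀ A : Finset N, A.card ≤ 1 → f A = 0)
    {C : Finset (Finset N)} (hC : (C : Set (Finset N)).Pairwise fun F G => (F ∩ G).card ≤ 1) :
    deltaOf f C id = f (C.sup id) - ∑ F ∈ C, f F := by
  rw [deltaOf, ← Finset.add_sum_erase _ _ (Finset.empty_mem_powerset C)]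
  have hsingle : C.image singleton ⊆ C.powerset.erase ∅ := by
    intro T hT
    obtain ⟨F, hF, rfl⟩ := Finset.mem_image.1 hT
    simpa using hF
  rw [← Finset.sum_subset hsingle, Finset.sum_image fun _ _ _ _ h => Finset.singleton_injective h]
  · simp [sub_eq_add_neg]
  · intro T hT hTC
    obtain ⟨hT0, hTC'⟩ := Finset.mem_erase.1 hT
    obtain ⟨F, rfl⟩ | hnt := (Finset.nonempty_iff_ne_empty.2 hT0).exists_eq_singleton_or_nontrivial
    · exact absurd (Finset.mem_image_of_mem _ (by simpa using hTC')) hTC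
    obtain ⟨F, hF, G, hG, hFG⟩ := hnt
    have hinf : T.inf id ⊆ F ∩ G := Finset.subset_inter (Finset.inf_le hF) (Finset.inf_le hG)
    rw [if_pos (Finset.nonempty_iff_ne_empty.2 hT0), hf _ ((Finset.card_le_card hinf).trans
      (hC (Finset.mem_powerset.1 hTC' hF) (Finset.mem_powerset.1 hTC' hG) hFG)), mul_zero]

end deltaOf

section nullity

variable {N : Type} [Fintype N] [DecidableEq N]

def nullity (M : FinMatroid N) (A : Finset N) : ℤ :=
  A.card - M.r A

variable (M : FinMatroid N)

lemma r_empty : M.r ∅ = 0 :=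
  le_antisymm (by simpa using M.r_le_card ∅) (M.r_nonneg ∅)

lemma nullity_nonneg (A : Finset N) : 0 ≤ M.nullity A :=
  sub_nonneg.2 (M.r_le_card A)

lemma nullity_mono {A B : Finset N} (h : A ⊆ B) : M.nullity A ≤ M.nullity B := by
  have hsub := M.submodular A (B \ A)
  rw [Finset.union_sdiff_of_subset h, Finset.inter_sdiff_self, r_empty] at hsub
  have hcard := Finset.card_sdiff_add_card_eq_card h
  have := M.r_le_card (B \ A)
  simp only [nullity]
  omega

lemma deltaOf_r_eq_sum_nullity_sub (hM : ∀ A : Finset N, A.card ≤ 1 → M.r A = A.card)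
    {C : Finset (Finset N)} (hC : (C : Set (Finset N)).Pairwise fun F G => (F ∩ G).card ≤ 1) :
    deltaOf M.r C id = ∑ F ∈ C, M.nullity F - M.nullity (C.sup id) := by
  have hr : M.r = (fun A => (A.card : ℤ)) - M.nullity := by
    ext A; simp [nullity]
  rw [hr, deltaOf_sub, deltaOf_card,
    deltaOf_eq_sub_sum (fun A hA => by simp [nullity, hM A hA]) hC]
  ring

lemma nflat_of_deltaOf {n : ℕ} (h : ∀ C : Finset (Finset N), (∀ F ∈ C, M.IsFlat F) →
    C.card ≤ n → deltaOf M.r C id ≤ 0) : M.NFlat n := by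
  intro ι _ _ F hcard hF
  rw [delta_eq_deltaOf, deltaOf_image]
  exact h _ (by simpa using hF) (Finset.card_image_le.trans hcard)

lemma nflat_two : M.NFlat 2 := by
  refine M.nflat_of_deltaOf fun C _ hC => ?_
  obtain h | h | h : C.card = 0 ∨ C.card = 1 ∨ C.card = 2 := by omega
  · simp [Finset.card_eq_zero.1 h, deltaOf, r_empty]
  · obtain ⟨A, rfl⟩ := Finset.card_eq_one.1 h
    exact (deltaOf_eq_zero_of_forall_subset (Finset.mem_singleton_self A) (by simp)).le
  · obtain ⟨A, B, hAB, rfl⟩ := Finset.card_eq_two.1 h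
    rw [deltaOf_pair _ hAB]
    linarith [M.submodular A B]

lemma exists_family_of_deltaOf_pos {C : Finset (Finset N)} {k : ℕ} (hC : ∀ F ∈ C, M.IsFlat F)
    (hk : C.card ≤ k) (hpos : 0 < deltaOf M.r C id) :
    ∃ (ι : Type) (_ : Fintype ι) (_ : DecidableEq ι) (F : ι → Finset N),
      Fintype.card ι ≤ k ∧ (∀ i, M.IsFlat (F i)) ∧ 0 < M.delta F := by
  refine ⟨C, inferInstance, inferInstance, Subtype.val, by simpa using hk, fun F => hC F F.2, ?_⟩
  rwa [delta_eq_deltaOf, deltaOf_image, Finset.univ_eq_attach, Finset.attach_image_val]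

variable {M}

lemma subset_of_isFlat {F G P : Finset N} (hF : M.IsFlat F) (hPF : P ⊆ F) (hPG : P ⊆ G)
    (hr : M.r G ≤ M.r P) : G ⊆ F := by
  intro z hzG
  by_contra hzF
  have hsub := M.submodular F (insert z P)
  rw [Finset.union_insert, Finset.union_eq_left.2 hPF, Finset.inter_insert_of_notMem hzF,
    Finset.inter_eq_right.2 hPF] at hsub
  linarith [M.r_mono (Finset.insert_subset hzG hPG), hF z hzF]

lemma card_inter_le_one_of_isFlat (hM : ∀ A : Finset N, A.card ≤ 2 → M.r A = A.card)
    {F G : Finset N} (hF : M.IsFlat F) (hG : M.IsFlat G) (hFr : M.r F ≤ 2) (hGr : M.r G ≤ 2)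
    (hFG : F ≠ G) : (F ∩ G).card ≤ 1 := by
  by_contra! h
  obtain ⟨P, hP, hPc⟩ := Finset.exists_subset_card_eq h
  have hrP : M.r P = 2 := by rw [hM P hPc.le, hPc]; rfl
  exact hFG <| subset_antisymm
    (subset_of_isFlat hG (hP.trans Finset.inter_subset_right) (hP.trans Finset.inter_subset_left)
      (by omega))
    (subset_of_isFlat hF (hP.trans Finset.inter_subset_left) (hP.trans Finset.inter_subset_right)
      (by omega))

end nullity

section Paving

variable {N : Type} [DecidableEq N]

variable (q : ℕ) (L : Finset (Finset N))

/-- The rank function of the paving matroid of rank `q + 1` whose dependent hyperplanes are the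
members of `L`. -/
def pavingRank (A : Finset N) : ℕ :=
  min A.card (if ∃ ℓ ∈ L, A ⊆ ℓ then q else q + 1)

variable {q L}

lemma pavingRank_mono {A B : Finset N} (h : A ⊆ B) : pavingRank q L A ≤ pavingRank q L B := by
  have := Finset.card_le_card h
  have : (∃ ℓ ∈ L, B ⊆ ℓ) → ∃ ℓ ∈ L, A ⊆ ℓ := fun ⟨ℓ, hℓ, hB⟩ => ⟨ℓ, hℓ, h.trans hB⟩
  unfold pavingRank
  by_cases hB : ∃ ℓ ∈ L, B ⊆ ℓ
  · rw [if_pos (this hB), if_pos hB]; omega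
  · split_ifs <;> omega

lemma pavingRank_submod (hL : (L : Set (Finset N)).Pairwise fun ℓ ℓ' => (ℓ ∩ ℓ').card < q)
    (A B : Finset N) :
    pavingRank q L (A ∪ B) + pavingRank q L (A ∩ B) ≤ pavingRank q L A + pavingRank q L B := by
  by_cases hAB : A ⊆ B
  · rw [Finset.union_eq_right.2 hAB, Finset.inter_eq_left.2 hAB, add_comm]
  by_cases hBA : B ⊆ A
  · rw [Finset.union_eq_left.2 hBA, Finset.inter_eq_right.2 hBA]
  have hcard := Finset.card_union_add_card_inter A B
  have hIA : (A ∩ B).card < A.card := Finset.card_lt_card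
    (Finset.ssubset_iff_subset_ne.2 ⟨Finset.inter_subset_left, mt Finset.inter_eq_left.1 hAB⟩)
  have hIB : (A ∩ B).card < B.card := Finset.card_lt_card
    (Finset.ssubset_iff_subset_ne.2 ⟨Finset.inter_subset_right, mt Finset.inter_eq_right.1 hBA⟩)
  have hU : (∃ ℓ ∈ L, A ∪ B ⊆ ℓ) → (∃ ℓ ∈ L, A ⊆ ℓ) ∧ ∃ ℓ ∈ L, B ⊆ ℓ := fun ⟨ℓ, hℓ, h⟩ =>
    ⟨⟨ℓ, hℓ, Finset.union_subset_left h⟩, ⟨ℓ, hℓ, Finset.union_subset_right h⟩⟩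
  have hI : ((∃ ℓ ∈ L, A ⊆ ℓ) ∨ ∃ ℓ ∈ L, B ⊆ ℓ) → ∃ ℓ ∈ L, A ∩ B ⊆ ℓ := by
    rintro (⟨ℓ, hℓ, h⟩ | ⟨ℓ, hℓ, h⟩)
    · exact ⟨ℓ, hℓ, Finset.inter_subset_left.trans h⟩
    · exact ⟨ℓ, hℓ, Finset.inter_subset_right.trans h⟩
  have hlines : (∃ ℓ ∈ L, A ⊆ ℓ) → (∃ ℓ ∈ L, B ⊆ ℓ) → (¬∃ ℓ ∈ L, A ∪ B ⊆ ℓ) →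
      (A ∩ B).card < q := by
    rintro ⟨ℓ, hℓ, hA⟩ ⟨ℓ', hℓ', hB⟩ hAB
    have hne : ℓ ≠ ℓ' := by
      rintro rfl
      exact hAB ⟨ℓ, hℓ, Finset.union_subset hA hB⟩
    exact (Finset.card_le_card (Finset.inter_subset_inter hA hB)).trans_lt (hL hℓ hℓ' hne)
  unfold pavingRank
  split_ifs <;> simp_all <;> omega

variable [Fintype N]

def paving (q : ℕ) (L : Finset (Finset N))
    (hL : (L : Set (Finset N)).Pairwise fun ℓ ℓ' => (ℓ ∩ ℓ').card < q) : FinMatroid N where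
  r A := pavingRank q L A
  r_nonneg _ := Int.natCast_nonneg _
  r_le_card _ := Int.ofNat_le.2 (min_le_left _ _)
  r_mono _ _ h := Int.ofNat_le.2 (pavingRank_mono h)
  submodular A B := by exact_mod_cast pavingRank_submod hL A B

variable {hL : (L : Set (Finset N)).Pairwise fun ℓ ℓ' => (ℓ ∩ ℓ').card < q}

lemma paving_r_le (A : Finset N) : (paving q L hL).r A ≤ q + 1 := by
  simp only [paving, pavingRank]
  split_ifs <;> omega

lemma paving_r_of_card_le {A : Finset N} (hA : A.card ≤ q) : (paving q L hL).r A = A.card := by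
  simp only [paving, pavingRank]
  split_ifs <;> omega

lemma paving_r_of_mem {ℓ : Finset N} (hℓ : ℓ ∈ L) (hq : q ≤ ℓ.card) : (paving q L hL).r ℓ = q := by
  simp only [paving, pavingRank, if_pos (⟨ℓ, hℓ, subset_rfl⟩ : ∃ ℓ' ∈ L, ℓ ⊆ ℓ')]
  omega

lemma paving_isFlat_of_mem {ℓ : Finset N} (hℓ : ℓ ∈ L) (hq : q ≤ ℓ.card) :
    (paving q L hL).IsFlat ℓ := by
  intro x hx
  have hcov : ¬∃ ℓ' ∈ L, insert x ℓ ⊆ ℓ' := by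
    rintro ⟨ℓ', hℓ', hsub⟩
    have hne : ℓ ≠ ℓ' := fun h => hx (h ▸ hsub (Finset.mem_insert_self x ℓ))
    have : (ℓ ∩ ℓ').card < q := hL hℓ hℓ' hne
    rw [Finset.inter_eq_left.2 ((Finset.subset_insert x ℓ).trans hsub)] at this
    omega
  rw [paving_r_of_mem hℓ hq]
  simp only [paving, pavingRank, if_neg hcov, Finset.card_insert_of_notMem hx]
  omega

lemma paving_r_le_of_isFlat {F : Finset N} (hF : (paving q L hL).IsFlat F)
    (hne : F ≠ Finset.univ) : (paving q L hL).r F ≤ q := by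
  obtain ⟨x, hx⟩ : ∃ x, x ∉ F := by simpa [Finset.eq_univ_iff_forall] using hne
  linarith [hF x hx, paving_r_le (hL := hL) (insert x F)]

lemma paving_mem_of_isFlat {F : Finset N} (hF : (paving q L hL).IsFlat F)
    (hne : F ≠ Finset.univ) (hq : q < F.card) : F ∈ L := by
  have hr := paving_r_le_of_isFlat hF hne
  simp only [paving, pavingRank] at hr
  split_ifs at hr with hcov
  · obtain ⟨ℓ, hℓ, hFℓ⟩ := hcov
    suffices ℓ ⊆ F from Finset.Subset.antisymm hFℓ this ▸ hℓ
    intro x hxℓ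
    by_contra hx
    have := hF x hx
    simp only [paving, pavingRank, if_pos (⟨ℓ, hℓ, hFℓ⟩ : ∃ ℓ ∈ L, F ⊆ ℓ),
      if_pos (⟨ℓ, hℓ, Finset.insert_subset hxℓ hFℓ⟩ : ∃ ℓ' ∈ L, insert x F ⊆ ℓ'),
      Finset.card_insert_of_notMem hx] at this
    omega
  · omega

lemma paving_nullity_eq_zero {F : Finset N} (hF : (paving q L hL).IsFlat F)
    (hne : F ≠ Finset.univ) (hFL : F ∉ L) : (paving q L hL).nullity F = 0 := by
  rw [nullity, paving_r_of_card_le (not_lt.1 (mt (paving_mem_of_isFlat hF hne) hFL)), sub_self]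

end Paving

lemma natCast_ne_zero_of_lt {n k : ℕ} (hk : 0 < k) (hkn : k < n) : (k : ZMod n) ≠ 0 :=
  fun h => absurd (Nat.le_of_dvd hk ((ZMod.natCast_eq_zero_iff k n).1 h)) (not_le.2 hkn)

lemma card_lt_card_union_image_add_one {n : ℕ} [NeZero n] {S : Finset (ZMod n)} (hS : S.Nonempty)
    (hSu : S ≠ Finset.univ) : S.card < (S ∪ S.image (· + 1)).card := by
  by_contra h
  have hsub : S.image (· + 1) ⊆ S := Finset.union_eq_left.1
    (Finset.eq_of_subset_of_card_le Finset.subset_union_left (not_lt.1 h)).symm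
  have hadd : ∀ m : ℕ, ∀ i ∈ S, i + m ∈ S := by
    intro m
    induction m with
    | zero => simp
    | succ m ih =>
      intro i hi
      simpa [add_assoc] using hsub (Finset.mem_image_of_mem _ (ih i hi))
  obtain ⟨i, hi⟩ := hS
  refine hSu (Finset.eq_univ_iff_forall.2 fun j => ?_)
  simpa [ZMod.natCast_zmod_val] using hadd (j - i).val i hi

section Wheel

variable (n : ℕ)

def rim (i : ZMod n) : Finset (ZMod n ⊕ ZMod n) :=
  ({i} : Finset (ZMod n)).disjSum {i, i + 1}

variable {n}

lemma rim_card (hn : 3 ≤ n) (i : ZMod n) : (rim n i).card = 3 := by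
  have h1 : (1 : ZMod n) ≠ 0 := by exact_mod_cast natCast_ne_zero_of_lt one_pos (by omega)
  rw [rim, Finset.card_disjSum, Finset.card_singleton, Finset.card_pair (by simpa using h1)]

lemma rim_injective : Function.Injective (rim n) := by
  intro i j h
  have : Sum.inl i ∈ rim n j := h ▸ by simp [rim]
  simpa [rim] using this

lemma sup_rim (S : Finset (ZMod n)) : S.sup (rim n) = S.disjSum (S ∪ S.image (· + 1)) := by
  ext (j | j) <;> simp [Finset.mem_sup, rim]
  constructor
  · rintro ⟨i, hi, rfl | rfl⟩ <;> simp [hi]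
  · rintro (h | h)
    · exact ⟨j, h, Or.inl rfl⟩
    · exact ⟨j + -1, h, Or.inr (by ring)⟩

variable (n) [NeZero n]

def hub : Finset (ZMod n ⊕ ZMod n) :=
  Finset.univ.disjSum ∅

def wheelLines : Finset (Finset (ZMod n ⊕ ZMod n)) :=
  insert (hub n) (Finset.univ.image (rim n))

variable {n}

lemma hub_card : (hub n).card = n := by
  simp [hub, ZMod.card]

lemma hub_ne_rim (i : ZMod n) : hub n ≠ rim n i := by
  intro h
  have : Sum.inr i ∈ rim n i := by simp [rim]
  simp [← h, hub] at this

lemma wheelLines_pairwise (hn : 3 ≤ n) :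
    (wheelLines n : Set (Finset (ZMod n ⊕ ZMod n))).Pairwise fun ℓ ℓ' => (ℓ ∩ ℓ').card < 2 := by
  have h2 : (2 : ZMod n) ≠ 0 := by exact_mod_cast natCast_ne_zero_of_lt two_pos (by omega)
  have key : ∀ ℓ ∈ wheelLines n, ∀ ℓ' ∈ wheelLines n, ℓ ≠ ℓ' → (ℓ ∩ ℓ').card ≤ 1 := by
    simp only [wheelLines, Finset.mem_insert, Finset.mem_image, Finset.mem_univ, true_and]
    rintro ℓ (rfl | ⟨i, rfl⟩) ℓ' (rfl | ⟨j, rfl⟩) hne <;>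
      refine Finset.card_le_one.2 fun x hx y hy => ?_ <;>
      rcases x with a | a <;> rcases y with b | b <;>
      simp [hub, rim] at hx hy hne <;> grind
  exact fun ℓ hℓ ℓ' hℓ' hne => Nat.lt_succ_of_le (key ℓ hℓ ℓ' hℓ' hne)

lemma hub_mem_wheelLines : hub n ∈ wheelLines n :=
  Finset.mem_insert_self _ _

lemma rim_mem_wheelLines (i : ZMod n) : rim n i ∈ wheelLines n :=
  Finset.mem_insert_of_mem (Finset.mem_image_of_mem _ (Finset.mem_univ i))

lemma wheelLines_card_le : (wheelLines n).card ≤ n + 1 := by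
  refine (Finset.card_insert_le _ _).trans (Nat.succ_le_succ ?_)
  simpa [ZMod.card] using Finset.card_image_le (s := Finset.univ) (f := rim n)

variable (n) in
def rimsIn (C : Finset (Finset (ZMod n ⊕ ZMod n))) : Finset (ZMod n) :=
  Finset.univ.filter fun i => rim n i ∈ C

lemma image_rim_rimsIn {C : Finset (Finset (ZMod n ⊕ ZMod n))} (hC : C ⊆ wheelLines n) :
    (rimsIn n C).image (rim n) = C.erase (hub n) := by
  ext F
  simp only [rimsIn, Finset.mem_image, Finset.mem_filter, Finset.mem_univ, true_and,
    Finset.mem_erase]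
  constructor
  · rintro ⟨i, hi, rfl⟩
    exact ⟨(hub_ne_rim i).symm, hi⟩
  · rintro ⟨hF, hFC⟩
    obtain rfl | hF' := Finset.mem_insert.1 (hC hFC)
    · exact absurd rfl hF
    · obtain ⟨i, -, rfl⟩ := Finset.mem_image.1 hF'
      exact ⟨i, hFC, rfl⟩

lemma sum_eq_of_subset_wheelLines {C : Finset (Finset (ZMod n ⊕ ZMod n))} (hC : C ⊆ wheelLines n)
    (g : Finset (ZMod n ⊕ ZMod n) → ℤ) :
    ∑ F ∈ C, g F = (if hub n ∈ C then g (hub n) else 0) + ∑ i ∈ rimsIn n C, g (rim n i) := by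
  rw [← Finset.sum_image fun i _ j _ h => rim_injective h, image_rim_rimsIn hC]
  split_ifs with h
  · rw [Finset.add_sum_erase _ _ h]
  · rw [zero_add, Finset.erase_eq_of_notMem h]

lemma sup_eq_of_subset_wheelLines {C : Finset (Finset (ZMod n ⊕ ZMod n))} (hC : C ⊆ wheelLines n) :
    C.sup id = (if hub n ∈ C then Finset.univ else rimsIn n C).disjSum
      (rimsIn n C ∪ (rimsIn n C).image (· + 1)) := by
  split_ifs with h
  · conv_lhs => rw [← Finset.insert_erase h]
    rw [Finset.sup_insert, ← image_rim_rimsIn hC, Finset.sup_image, Function.id_comp, sup_rim]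
    ext (j | j) <;> simp [hub]
  · conv_lhs => rw [← Finset.erase_eq_of_notMem h, ← image_rim_rimsIn hC]
    rw [Finset.sup_image, Function.id_comp, sup_rim]

variable (n) in
def wheel (hn : 3 ≤ n) : FinMatroid (ZMod n ⊕ ZMod n) :=
  paving 2 (wheelLines n) (wheelLines_pairwise hn)

lemma wheel_isFlat_of_mem (hn : 3 ≤ n) {ℓ : Finset (ZMod n ⊕ ZMod n)} (hℓ : ℓ ∈ wheelLines n) :
    (wheel n hn).IsFlat ℓ := by
  refine paving_isFlat_of_mem hℓ ?_
  obtain rfl | hℓ := Finset.mem_insert.1 hℓ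
  · rw [hub_card]; omega
  · obtain ⟨i, -, rfl⟩ := Finset.mem_image.1 hℓ
    rw [rim_card hn]; omega

lemma wheel_r_of_card_le (hn : 3 ≤ n) {A : Finset (ZMod n ⊕ ZMod n)} (hA : A.card ≤ 2) :
    (wheel n hn).r A = A.card :=
  paving_r_of_card_le hA

lemma wheel_nullity_hub (hn : 3 ≤ n) : (wheel n hn).nullity (hub n) = n - 2 := by
  rw [nullity, wheel, paving_r_of_mem hub_mem_wheelLines (by rw [hub_card]; omega), hub_card]
  rfl

lemma wheel_nullity_rim (hn : 3 ≤ n) (i : ZMod n) : (wheel n hn).nullity (rim n i) = 1 := by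
  rw [nullity, wheel, paving_r_of_mem (rim_mem_wheelLines i) (by rw [rim_card hn]; omega),
    rim_card hn]
  rfl

lemma sum_nullity_le_nullity_sup (hn : 3 ≤ n) {C : Finset (Finset (ZMod n ⊕ ZMod n))}
    (hC : C ⊆ wheelLines n) (hCn : C.card ≤ n) :
    ∑ F ∈ C, (wheel n hn).nullity F ≤ (wheel n hn).nullity (C.sup id) := by
  obtain h | h | hC2 : C.card = 0 ∨ C.card = 1 ∨ 2 ≤ C.card := by omega
  · simp [Finset.card_eq_zero.1 h, nullity_nonneg]
  · obtain ⟨F, rfl⟩ := Finset.card_eq_one.1 h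
    simp
  have hsum := sum_eq_of_subset_wheelLines hC (wheel n hn).nullity
  have hcard := sum_eq_of_subset_wheelLines hC fun _ => 1
  simp only [wheel_nullity_hub, wheel_nullity_rim, Finset.sum_const, nsmul_eq_mul, mul_one]
    at hsum hcard
  -- `C.sup id` consists of the hub (or the `aᵢ` of the chosen rims) and the points `bᵢ` on them.
  have hsup := congrArg Finset.card (sup_eq_of_subset_wheelLines hC)
  rw [Finset.card_disjSum] at hsup
  set S := rimsIn n C
  have hT : 0 < S.card → min (S.card + 1) n ≤ (S ∪ S.image (· + 1)).card := by
    intro hS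
    rcases eq_or_ne S Finset.univ with hSu | hSu
    · have := Finset.card_le_card (Finset.subset_union_left (s₁ := S) (s₂ := S.image (· + 1)))
      have hSn : S.card = n := by rw [hSu, Finset.card_univ, ZMod.card]
      omega
    · have := card_lt_card_union_image_add_one (Finset.card_pos.1 hS) hSu
      omega
  have hSn : S.card ≤ n := (Finset.card_le_univ S).trans (ZMod.card n).le
  have hr : (wheel n hn).r (C.sup id) ≤ 3 := paving_r_le _
  rw [nullity]
  by_cases hH : hub n ∈ C
  · simp only [hH, if_true, Finset.card_univ, ZMod.card] at hsum hcard hsup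
    omega
  · simp only [hH, if_false] at hsum hcard hsup
    omega

lemma wheel_nflat (hn : 3 ≤ n) : (wheel n hn).NFlat n := by
  refine (wheel n hn).nflat_of_deltaOf fun C hflat hCn => ?_
  by_cases htop : Finset.univ ∈ C
  · exact (deltaOf_eq_zero_of_forall_subset htop fun F _ => Finset.subset_univ F).le
  have hproper : ∀ F ∈ C, F ≠ Finset.univ := fun F hF h => htop (h ▸ hF)
  have hpair : (C : Set (Finset (ZMod n ⊕ ZMod n))).Pairwise fun F G => (F ∩ G).card ≤ 1 :=
    fun F hF G hG => card_inter_le_one_of_isFlat (fun _ => wheel_r_of_card_le hn) (hflat F hF)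
      (hflat G hG) (paving_r_le_of_isFlat (hflat F hF) (hproper F hF))
      (paving_r_le_of_isFlat (hflat G hG) (hproper G hG))
  rw [deltaOf_r_eq_sum_nullity_sub _ (fun A hA => wheel_r_of_card_le hn (by omega)) hpair,
    sub_nonpos]
  calc ∑ F ∈ C, (wheel n hn).nullity F
      = ∑ F ∈ C with F ∈ wheelLines n, (wheel n hn).nullity F :=
        (Finset.sum_filter_of_ne fun F hF hν => by_contra fun hFL =>
          hν (paving_nullity_eq_zero (hflat F hF) (hproper F hF) hFL)).symm
    _ ≤ (wheel n hn).nullity ((C.filter (· ∈ wheelLines n)).sup id) :=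
      sum_nullity_le_nullity_sup hn (fun F hF => (Finset.mem_filter.1 hF).2)
        ((Finset.card_filter_le _ _).trans hCn)
    _ ≤ (wheel n hn).nullity (C.sup id) :=
      nullity_mono _ (Finset.sup_mono (Finset.filter_subset _ _))

lemma deltaOf_wheelLines (hn : 3 ≤ n) : deltaOf (wheel n hn).r (wheelLines n) id = 1 := by
  have hpair : (wheelLines n : Set (Finset (ZMod n ⊕ ZMod n))).Pairwise
      fun F G => (F ∩ G).card ≤ 1 :=
    (wheelLines_pairwise hn).mono' fun _ _ h => Nat.le_of_lt_succ h
  have hrims : rimsIn n (wheelLines n) = Finset.univ :=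
    Finset.filter_true_of_mem fun i _ => rim_mem_wheelLines i
  have hsup : (wheelLines n).sup id = Finset.univ := by
    rw [sup_eq_of_subset_wheelLines subset_rfl, if_pos hub_mem_wheelLines, hrims,
      Finset.union_eq_left.2 (Finset.subset_univ _), Finset.univ_disjSum_univ]
  have hsum := sum_eq_of_subset_wheelLines (subset_refl _) (wheel n hn).nullity
  simp only [if_pos hub_mem_wheelLines, hrims, wheel_nullity_hub, wheel_nullity_rim,
    Finset.sum_const, Finset.card_univ, ZMod.card, nsmul_eq_mul, mul_one] at hsum
  have hr3 : (wheel n hn).r Finset.univ = 3 := by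
    have hflat : (wheel n hn).IsFlat (hub n) :=
      paving_isFlat_of_mem hub_mem_wheelLines (by rw [hub_card]; omega)
    have hhub : (wheel n hn).r (hub n) = 2 :=
      paving_r_of_mem hub_mem_wheelLines (by rw [hub_card]; omega)
    have hout : Sum.inr 0 ∉ hub n := by simp [hub]
    linarith [hflat _ hout, (wheel n hn).r_mono (Finset.subset_univ (insert (Sum.inr 0) (hub n))),
      show (wheel n hn).r Finset.univ ≤ 3 from paving_r_le _]
  rw [deltaOf_r_eq_sum_nullity_sub _ (fun A hA => wheel_r_of_card_le hn (by omega)) hpair, hsum,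
    hsup, nullity, hr3, Finset.card_univ, Fintype.card_sum, ZMod.card]
  push_cast
  ring

end Wheel

def sixPlanes : Finset (Finset (Fin 6)) :=
  {{0, 1, 2, 3}, {0, 1, 4, 5}, {2, 3, 4, 5}}

lemma sixPlanes_pairwise :
    (sixPlanes : Set (Finset (Fin 6))).Pairwise fun ℓ ℓ' => (ℓ ∩ ℓ').card < 3 := by
  intro ℓ hℓ ℓ' hℓ' hne
  simp only [sixPlanes, Finset.coe_insert, Finset.coe_singleton, Set.mem_insert_iff,
    Set.mem_singleton_iff] at hℓ hℓ'
  rcases hℓ with rfl | rfl | rfl <;> rcases hℓ' with rfl | rfl | rfl <;> first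
    | exact absurd rfl hne
    | decide

def six : FinMatroid (Fin 6) :=
  paving 3 sixPlanes sixPlanes_pairwise

lemma deltaOf_sixPlanes : deltaOf six.r sixPlanes id = 1 := by
  decide

lemma six_isFlat_of_mem {F : Finset (Fin 6)} (hF : F ∈ sixPlanes) : six.IsFlat F :=
  paving_isFlat_of_mem hF (by revert F; decide)

end FinMatroid

/-- For every integer `n ≥ 2` there is a finite matroid with flatness degree exactly
`n`: it is `n`-flat, but some family of at most `n + 1` flats has `Δ(C) > 0`. -/
theorem exists_matroid_flatness_degree (n : ℕ) (hn : 2 ≤ n) :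
    ∃ (N : Type) (_ : Fintype N) (_ : DecidableEq N) (M : FinMatroid N),
      M.NFlat n ∧
      ∃ (ι : Type) (_ : Fintype ι) (_ : DecidableEq ι) (F : ι → Finset N),
        Fintype.card ι ≤ n + 1 ∧ (∀ i, M.IsFlat (F i)) ∧ 0 < M.delta F := by
  rcases hn.eq_or_lt with rfl | hn
  · exact ⟨Fin 6, inferInstance, inferInstance, FinMatroid.six, FinMatroid.six.nflat_two,
      FinMatroid.six.exists_family_of_deltaOf_pos (fun _ => FinMatroid.six_isFlat_of_mem)
        (by decide) (by rw [FinMatroid.deltaOf_sixPlanes]; exact one_pos)⟩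
  · have : NeZero n := ⟨by omega⟩
    exact ⟨ZMod n ⊕ ZMod n, inferInstance, inferInstance, FinMatroid.wheel n hn,
      FinMatroid.wheel_nflat hn,
      (FinMatroid.wheel n hn).exists_family_of_deltaOf_pos
        (fun _ => FinMatroid.wheel_isFlat_of_mem hn) FinMatroid.wheelLines_card_le
        (by rw [FinMatroid.deltaOf_wheelLines]; exact one_pos)⟩
end

section
/- Every finite modular matroid is 3-flat: if M satisfies r(A ∪ B) + r(A ∩ B) = r(A) + r(B) for all flats A, B, then Δ(C) ≤ 0 for every family C of at most 3 flats of M. -/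
/-!
Adjoining a set `G` to a family `F` changes `Δ` by a two-term recursion:
`Δ(F, G) = Δ(F) - Δ(F ∩ G) + (r(U ∪ G) + r(U ∩ G) - r(U) - r(G))` with `U = ⋃ F`.
Hence `Δ` of two sets is their submodularity defect, which vanishes for flats of a modular
matroid. For three flats `A, B, C` the terms `Δ(B, C)` and `Δ(B ∩ A, C ∩ A)` therefore vanish
(intersections of flats are flats), leaving the defect of `B ∪ C` and `A`, which is `≤ 0`.
-/

namespace FinMatroid

variable {N : Type} [Fintype N] [DecidableEq N]

section

variable (M : FinMatroid N)

lemma r_insert_le_of_subset {X Y : Finset N} (hXY : X ⊆ Y) {n : N}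
    (hn : M.r (insert n X) ≤ M.r X) : M.r (insert n Y) ≤ M.r Y := by
  have hsub := M.submodular Y (insert n X)
  rw [Finset.union_insert, Finset.union_eq_left.2 hXY] at hsub
  have hX : M.r X ≤ M.r (Y ∩ insert n X) :=
    M.r_mono (Finset.subset_inter hXY (Finset.subset_insert n X))
  linarith

def modularDefect (A B : Finset N) : ℤ :=
  M.r (A ∪ B) + M.r (A ∩ B) - M.r A - M.r B

lemma modularDefect_nonpos (A B : Finset N) : M.modularDefect A B ≤ 0 := by
  have := M.submodular A B
  unfold modularDefect
  linarith

lemma modularDefect_comm (A B : Finset N) : M.modularDefect A B = M.modularDefect B A := by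
  simp only [modularDefect, Finset.union_comm, Finset.inter_comm]
  ring

def deltaOn {ι : Type} [DecidableEq ι] (s : Finset ι) (F : ι → Finset N) : ℤ :=
  ∑ S ∈ s.powerset, (-1 : ℤ) ^ S.card * M.r (if S.Nonempty then S.inf F else s.sup F)

lemma delta_eq_deltaOn_univ {ι : Type} [Fintype ι] [DecidableEq ι] (F : ι → Finset N) :
    M.delta F = M.deltaOn Finset.univ F := by
  rw [delta, deltaOn, Finset.powerset_univ]

variable {ι : Type} [DecidableEq ι]

lemma deltaOn_empty (F : ι → Finset N) : M.deltaOn ∅ F = 0 := by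
  simp [deltaOn, r_empty]

lemma deltaOn_insert {a : ι} {s : Finset ι} (ha : a ∉ s) (F : ι → Finset N) :
    M.deltaOn (insert a s) F =
      M.deltaOn s F - M.deltaOn s (fun i => F i ∩ F a) + M.modularDefect (s.sup F) (F a) := by
  have hsup : s.sup (fun i => F i ∩ F a) = s.sup F ∩ F a :=
    (Finset.sup_inf_distrib_right s F (F a)).symm
  -- the terms of `T` and `insert a T` on the left against the terms of `T` on the right
  have hterm : ∀ T ∈ s.powerset,
      (-1 : ℤ) ^ T.card * M.r (if T.Nonempty then T.inf F else (insert a s).sup F)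
        + (-1 : ℤ) ^ (insert a T).card * M.r (if (insert a T).Nonempty then (insert a T).inf F
            else (insert a s).sup F)
        - (-1 : ℤ) ^ T.card * M.r (if T.Nonempty then T.inf F else s.sup F)
        + (-1 : ℤ) ^ T.card * M.r (if T.Nonempty then T.inf (fun i => F i ∩ F a)
            else s.sup (fun i => F i ∩ F a))
        = if T = ∅ then M.modularDefect (s.sup F) (F a) else 0 := by
    intro T hT
    have haT : a ∉ T := fun h => ha (Finset.mem_powerset.1 hT h)
    rw [Finset.card_insert_of_notMem haT, if_pos (Finset.insert_nonempty a T), Finset.inf_insert]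
    rcases T.eq_empty_or_nonempty with rfl | hne
    · simp [hsup, modularDefect, Finset.sup_insert, Finset.union_comm]
      ring
    · have hinf : T.inf (fun i => F i ∩ F a) = F a ⊓ T.inf F :=
        (Finset.inf_inf (f := F) (g := fun _ => F a)).trans (by rw [Finset.inf_const hne, inf_comm])
      rw [if_neg hne.ne_empty, if_pos hne, if_pos hne, if_pos hne, hinf]
      ring
  have hsum := Finset.sum_congr rfl hterm
  rw [Finset.sum_ite_eq' s.powerset ∅, if_pos (Finset.empty_mem_powerset s)] at hsum
  simp only [Finset.sum_add_distrib, Finset.sum_sub_distrib] at hsum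
  rw [deltaOn, deltaOn, deltaOn, Finset.sum_powerset_insert ha]
  linarith

lemma deltaOn_singleton (F : ι → Finset N) (a : ι) : M.deltaOn {a} F = 0 := by
  rw [← Finset.insert_empty, M.deltaOn_insert (Finset.notMem_empty a)]
  simp [deltaOn_empty, modularDefect]

lemma deltaOn_pair (F : ι → Finset N) {a b : ι} (hab : a ≠ b) :
    M.deltaOn {a, b} F = M.modularDefect (F a) (F b) := by
  rw [M.deltaOn_insert (Finset.notMem_singleton.2 hab), deltaOn_singleton, deltaOn_singleton,
    Finset.sup_singleton, modularDefect_comm]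
  ring

lemma deltaOn_triple (F : ι → Finset N) {a b c : ι} (hab : a ≠ b) (hac : a ≠ c) (hbc : b ≠ c) :
    M.deltaOn {a, b, c} F = M.modularDefect (F b) (F c)
      - M.modularDefect (F b ∩ F a) (F c ∩ F a) + M.modularDefect (F b ∪ F c) (F a) := by
  rw [M.deltaOn_insert (by simp [hab, hac]), deltaOn_pair _ _ hbc, deltaOn_pair _ _ hbc,
    Finset.sup_insert, Finset.sup_singleton, Finset.sup_eq_union]

def IsModular : Prop :=
  ∀ A B, M.IsFlat A → M.IsFlat B → M.r (A ∪ B) + M.r (A ∩ B) = M.r A + M.r B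

end

variable {M : FinMatroid N}

lemma IsFlat.inter_s10 {A B : Finset N} (hA : M.IsFlat A) (hB : M.IsFlat B) :
    M.IsFlat (A ∩ B) := by
  intro n hn
  by_contra! hle
  rcases not_and_or.1 (Finset.mem_inter.not.1 hn) with hnA | hnB
  · exact (M.r_insert_le_of_subset Finset.inter_subset_left hle).not_gt (hA n hnA)
  · exact (M.r_insert_le_of_subset Finset.inter_subset_right hle).not_gt (hB n hnB)

lemma IsModular.modularDefect_eq_zero (hM : M.IsModular) {A B : Finset N}
    (hA : M.IsFlat A) (hB : M.IsFlat B) : M.modularDefect A B = 0 := by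
  have := hM A B hA hB
  unfold modularDefect
  linarith

lemma IsModular.deltaOn_nonpos_of_card_le_three (hM : M.IsModular) {ι : Type} [DecidableEq ι]
    {s : Finset ι} (hs : s.card ≤ 3) {F : ι → Finset N} (hF : ∀ i ∈ s, M.IsFlat (F i)) :
    M.deltaOn s F ≤ 0 := by
  interval_cases h : s.card
  · rw [Finset.card_eq_zero.1 h, deltaOn_empty]
  · obtain ⟨a, rfl⟩ := Finset.card_eq_one.1 h
    rw [deltaOn_singleton]
  · obtain ⟨a, b, hab, rfl⟩ := Finset.card_eq_two.1 h
    rw [deltaOn_pair _ _ hab]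
    exact M.modularDefect_nonpos _ _
  · obtain ⟨a, b, c, hab, hac, hbc, rfl⟩ := Finset.card_eq_three.1 h
    have hFa := hF a (by simp)
    have hFb := hF b (by simp)
    have hFc := hF c (by simp)
    rw [deltaOn_triple _ _ hab hac hbc, hM.modularDefect_eq_zero hFb hFc,
      hM.modularDefect_eq_zero (hFb.inter_s10 hFa) (hFc.inter_s10 hFa)]
    linarith [M.modularDefect_nonpos (F b ∪ F c) (F a)]

end FinMatroid

/-- Every finite modular matroid is 3-flat: if `r(A ∪ B) + r(A ∩ B) = r(A) + r(B)`
for all flats `A, B`, then `Δ(C) ≤ 0` for every family `C` of at most 3 flats. -/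
theorem threeFlat_of_modular {N : Type} [Fintype N] [DecidableEq N]
    (M : FinMatroid N)
    (hmod : ∀ A B, M.IsFlat A → M.IsFlat B →
      M.r (A ∪ B) + M.r (A ∩ B) = M.r A + M.r B) :
    M.NFlat 3 := by
  intro ι _ _ F hcard hF
  rw [M.delta_eq_deltaOn_univ]
  exact FinMatroid.IsModular.deltaOn_nonpos_of_card_le_three hmod hcard fun i _ => hF i
end
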